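/- arXiv:1902.00230 — 2 statements merged into one kernel-verified Lean document; each statement's English description precedes it below -/
import Mathlib

section
/- A permutation ρ of {1,…,n} obtained from the identity by a TDRL operation with binary pattern b can itself produce the identity by a TDRL operation if and only if b has the form 1^r 0^s 1^t 0^u for nonnegative integers r, s, t, u with r+s+t+u = n. -/
/-- The TDRL operation with binary pattern `b` applied to a sequence `l`:
concatenate the entries at positions where `b` is `true` (in order)
with the entries at positions where `b` is `false` (in order). -/
def tdrl (b : List Bool) (l : List ℕ) : List ℕ :=
  ((l.zip b).filter (fun p => p.2)).map Prod.fst ++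
  ((l.zip b).filter (fun p => !p.2)).map Prod.fst

/-- The mirror-TDRL operation: kept entries of the original copy followed by
kept entries of the reversed copy. -/
def mtdrl (b : List Bool) (l : List ℕ) : List ℕ :=
  ((l.zip b).filter (fun p => p.2)).map Prod.fst ++
  (((l.zip b).filter (fun p => !p.2)).map Prod.fst).reverse

/-- The identity permutation `(1, 2, …, n)` as a list. -/
def ident (n : ℕ) : List ℕ := List.range' 1 n

/-- `l` is a permutation of `{1, …, n}`. -/
def IsPermOf (n : ℕ) (l : List ℕ) : Prop := l.Perm (ident n)

/-- Permutations obtainable from `π` by one TDRL operation. -/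
def SOut (π : List ℕ) : Set (List ℕ) :=
  {ρ | ∃ b : List Bool, b.length = π.length ∧ tdrl b π = ρ}

/-- Permutations `ρ` from which `π` is obtainable by one TDRL operation. -/
def SIn (π : List ℕ) : Set (List ℕ) :=
  {ρ | ρ.Perm π ∧ ∃ b : List Bool, b.length = ρ.length ∧ tdrl b ρ = π}

/-- Permutations obtainable from `π` by one MTDRL operation. -/
def SMOut (π : List ℕ) : Set (List ℕ) :=
  {ρ | ∃ b : List Bool, b.length = π.length ∧ mtdrl b π = ρ}

/-- Permutations `ρ` from which `π` is obtainable by one MTDRL operation. -/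
def SMIn (π : List ℕ) : Set (List ℕ) :=
  {ρ | ρ.Perm π ∧ ∃ b : List Bool, b.length = ρ.length ∧ mtdrl b ρ = π}

/-- Permutations obtainable from `π` by one bounded TDRL operation of width `k`. -/
def SOutK (k : ℕ) (π : List ℕ) : Set (List ℕ) :=
  {ρ | ∃ i, ∃ b : List Bool, i + k ≤ π.length ∧ b.length = k ∧
    ρ = π.take i ++ tdrl b ((π.drop i).take k) ++ π.drop (i + k)}

/-- Permutations `ρ` from which `π` is obtainable by one bounded TDRL of width `k`. -/
def SInK (k : ℕ) (π : List ℕ) : Set (List ℕ) :=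
  {ρ | ρ.Perm π ∧ ∃ i, ∃ b : List Bool, i + k ≤ ρ.length ∧ b.length = k ∧
    π = ρ.take i ++ tdrl b ((ρ.drop i).take k) ++ ρ.drop (i + k)}

/-- Permutations obtainable from `π` by one bounded MTDRL operation of width `k`. -/
def SMOutK (k : ℕ) (π : List ℕ) : Set (List ℕ) :=
  {ρ | ∃ i, ∃ b : List Bool, i + k ≤ π.length ∧ b.length = k ∧
    ρ = π.take i ++ mtdrl b ((π.drop i).take k) ++ π.drop (i + k)}

/-- Permutations `ρ` from which `π` is obtainable by one bounded MTDRL of width `k`. -/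
def SMInK (k : ℕ) (π : List ℕ) : Set (List ℕ) :=
  {ρ | ρ.Perm π ∧ ∃ i, ∃ b : List Bool, i + k ≤ ρ.length ∧ b.length = k ∧
    π = ρ.take i ++ mtdrl b ((ρ.drop i).take k) ++ ρ.drop (i + k)}

/-!
Let `ρ = tdrl b id`. If `b` contains `0101` at positions `i < j < k < l`, then `ρ` has the
inversions `(j, i)` and `(l, k)`. A TDRL operation sorting `ρ` splits it into two subsequences
`T` and `F` with `T ++ F` sorted; both are increasing, so every inversion of `ρ` takes its smaller
entry from `T` and its larger one from `F`. This forces `k ∈ T` and `j ∈ F`, hence `k < j`, a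
contradiction. Patterns avoiding `0101` are exactly `1^r 0^s 1^t 0^u`, and for such a pattern
`ρ = A₁ A₃ A₂ A₄` (blocks of lengths `r, s, t, u`), which the pattern `1^r 0^t 1^s 0^u` sorts back.
-/

open List

section Lists

variable {α : Type*}

theorem map_fst_zip_sublist {β : Type*} (l : List α) (b : List β) :
    (l.zip b).map Prod.fst <+ l := by
  induction l generalizing b with
  | nil => simp
  | cons x l ih => cases b <;> simp [ih]

theorem zip_replicate_length {β : Type*} (l : List α) (c : β) :
    l.zip (replicate l.length c) = l.map (·, c) := by
  induction l <;> simp_all [replicate_succ]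

theorem exists_append_of_length_eq_add {l : List α} {m n : ℕ} (h : l.length = m + n) :
    ∃ l₁ l₂, l₁.length = m ∧ l₂.length = n ∧ l = l₁ ++ l₂ :=
  ⟨l.take m, l.drop m, by simp; omega, by simp; omega, (take_append_drop m l).symm⟩

theorem not_pair_sublist_of_pairwise_sublist [Preorder α] {S ρ : List α} {a c : α}
    (hρ : ρ.Nodup) (hS : S <+ ρ) (hsorted : S.Pairwise (· < ·)) (ha : a ∈ S) (hc : c ∈ S)
    (hac : a < c) : ¬ [c, a] <+ ρ := by
  intro hca
  have hacS : [a, c] <+ S :=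
    sublist_of_subperm_of_pairwise (subperm_of_subset (by simpa using hac.ne) (by simp [ha, hc]))
      (by simpa using hac) hsorted
  have := (hρ.perm_iff_eq_of_sublist (hacS.trans hS) hca).mp (Perm.swap c a [])
  simp only [cons.injEq, and_true] at this
  exact hac.ne this.1

theorem mem_left_and_mem_right_of_inversion [Preorder α] {ρ T F : List α} {a c : α}
    (hρ : ρ.Nodup) (hT : T <+ ρ) (hF : F <+ ρ) (hsorted : (T ++ F).Pairwise (· < ·))
    (ha : a ∈ T ++ F) (hc : c ∈ T ++ F) (hac : a < c) (hca : [c, a] <+ ρ) :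
    a ∈ T ∧ c ∈ F := by
  obtain ⟨hTs, hFs, hTF⟩ := pairwise_append.mp hsorted
  rcases mem_append.mp ha with ha | ha <;> rcases mem_append.mp hc with hc | hc
  · exact absurd hca (not_pair_sublist_of_pairwise_sublist hρ hT hTs ha hc hac)
  · exact ⟨ha, hc⟩
  · exact absurd (hTF c hc a ha) (lt_asymm hac)
  · exact absurd hca (not_pair_sublist_of_pairwise_sublist hρ hF hFs ha hc hac)

theorem lt_of_inversions_of_shuffle [Preorder α] {ρ T F : List α} {a₁ c₁ a₂ c₂ : α}
    (hρ : ρ.Nodup) (hT : T <+ ρ) (hF : F <+ ρ) (hsorted : (T ++ F).Pairwise (· < ·))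
    (hρTF : ρ ⊆ T ++ F) (h₁ : [c₁, a₁] <+ ρ) (h₂ : [c₂, a₂] <+ ρ)
    (ha₁ : a₁ < c₁) (ha₂ : a₂ < c₂) : a₂ < c₁ := by
  have hmem : ∀ {x y : α}, [x, y] <+ ρ → x ∈ T ++ F ∧ y ∈ T ++ F := fun h =>
    ⟨hρTF (h.subset (by simp)), hρTF (h.subset (by simp))⟩
  obtain ⟨-, hc₁⟩ := mem_left_and_mem_right_of_inversion hρ hT hF hsorted
    (hmem h₁).2 (hmem h₁).1 ha₁ h₁
  obtain ⟨ha₂, -⟩ := mem_left_and_mem_right_of_inversion hρ hT hF hsorted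
    (hmem h₂).2 (hmem h₂).1 ha₂ h₂
  exact (pairwise_append.mp hsorted).2.2 a₂ ha₂ c₁ hc₁

end Lists

section Blocks

def alternating : Bool → ℕ → List Bool
  | _, 0 => []
  | c, k + 1 => c :: alternating (!c) k

def blocks : Bool → List ℕ → List Bool
  | _, [] => []
  | c, m :: ms => replicate m c ++ blocks (!c) ms

theorem blocks_replicate_zero (c : Bool) (k : ℕ) : blocks c (replicate k 0) = [] := by
  induction k generalizing c with
  | zero => rfl
  | succ k ih => simp [replicate_succ, blocks, ih]

theorem exists_blocks_of_not_sublist_alternating {c : Bool} {k : ℕ} {b : List Bool}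
    (h : ¬ alternating c (k + 1) <+ b) :
    ∃ ms : List ℕ, ms.length = k + 1 ∧ b = blocks (!c) ms := by
  induction b generalizing c k with
  | nil => exact ⟨replicate (k + 1) 0, length_replicate, (blocks_replicate_zero _ _).symm⟩
  | cons x b ih =>
    by_cases hx : x = c
    · subst hx
      cases k with
      | zero => exact absurd ((nil_sublist b).cons_cons x) h
      | succ k =>
        obtain ⟨_ | ⟨m, ms⟩, hlen, rfl⟩ := ih (c := !x) (k := k) fun h' => h (h'.cons_cons x)
        · simp at hlen
        · exact ⟨0 :: (m + 1) :: ms, by simpa using hlen, by simp [blocks, replicate_succ]⟩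
    · obtain ⟨_ | ⟨m, ms⟩, hlen, rfl⟩ := ih (c := c) (k := k) fun h' => h (h'.cons x)
      · simp at hlen
      · refine ⟨(m + 1) :: ms, by simpa using hlen, ?_⟩
        simp [blocks, replicate_succ, Bool.eq_not_of_ne hx]

end Blocks

section TDRL

def tdrlFront (b : List Bool) (l : List ℕ) : List ℕ :=
  ((l.zip b).filter (fun p => p.2)).map Prod.fst

def tdrlBack (b : List Bool) (l : List ℕ) : List ℕ :=
  ((l.zip b).filter (fun p => !p.2)).map Prod.fst

theorem tdrl_eq_front_append_back (b : List Bool) (l : List ℕ) :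
    tdrl b l = tdrlFront b l ++ tdrlBack b l := rfl

theorem tdrlFront_sublist (b : List Bool) (l : List ℕ) : tdrlFront b l <+ l :=
  (filter_sublist.map Prod.fst).trans (map_fst_zip_sublist l b)

theorem tdrlBack_sublist (b : List Bool) (l : List ℕ) : tdrlBack b l <+ l :=
  (filter_sublist.map Prod.fst).trans (map_fst_zip_sublist l b)

theorem tdrl_perm {b : List Bool} {l : List ℕ} (h : l.length ≤ b.length) : tdrl b l ~ l := by
  have := (filter_append_perm (fun p : ℕ × Bool => p.2) (l.zip b)).map Prod.fst
  rwa [map_append, map_fst_zip h] at this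

theorem pair_sublist_tdrl {b : List Bool} {l : List ℕ} {x y : ℕ}
    (hx : (x, true) ∈ l.zip b) (hy : (y, false) ∈ l.zip b) : [x, y] <+ tdrl b l :=
  have hx' : x ∈ tdrlFront b l := mem_map_of_mem (f := Prod.fst) (mem_filter.mpr ⟨hx, rfl⟩)
  have hy' : y ∈ tdrlBack b l := mem_map_of_mem (f := Prod.fst) (mem_filter.mpr ⟨hy, rfl⟩)
  (singleton_sublist.mpr hx').append (singleton_sublist.mpr hy')

@[simp]
theorem tdrlFront_append {b₁ b₂ : List Bool} {l₁ l₂ : List ℕ} (h : l₁.length = b₁.length) :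
    tdrlFront (b₁ ++ b₂) (l₁ ++ l₂) = tdrlFront b₁ l₁ ++ tdrlFront b₂ l₂ := by
  simp [tdrlFront, zip_append h]

@[simp]
theorem tdrlBack_append {b₁ b₂ : List Bool} {l₁ l₂ : List ℕ} (h : l₁.length = b₁.length) :
    tdrlBack (b₁ ++ b₂) (l₁ ++ l₂) = tdrlBack b₁ l₁ ++ tdrlBack b₂ l₂ := by
  simp [tdrlBack, zip_append h]

@[simp]
theorem tdrlFront_replicate (l : List ℕ) (c : Bool) :
    tdrlFront (replicate l.length c) l = if c then l else [] := by
  cases c <;> simp [tdrlFront, zip_replicate_length, filter_map, Function.comp_def]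

@[simp]
theorem tdrlBack_replicate (l : List ℕ) (c : Bool) :
    tdrlBack (replicate l.length c) l = if c then [] else l := by
  cases c <;> simp [tdrlBack, zip_replicate_length, filter_map, Function.comp_def]

theorem tdrl_replicate_four (l₁ l₂ l₃ l₄ : List ℕ) :
    tdrl (replicate l₁.length true ++ replicate l₂.length false ++
        replicate l₃.length true ++ replicate l₄.length false) (l₁ ++ l₂ ++ l₃ ++ l₄) =
      l₁ ++ l₃ ++ l₂ ++ l₄ := by
  simp [tdrl_eq_front_append_back]

theorem tdrl_tdrl_replicate_four {l : List ℕ} {r s t u : ℕ} (hl : l.length = r + s + t + u) :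
    tdrl (replicate r true ++ replicate t false ++ replicate s true ++ replicate u false)
      (tdrl (replicate r true ++ replicate s false ++ replicate t true ++ replicate u false) l) =
        l := by
  obtain ⟨l₁₂₃, l₄, h₁₂₃, rfl, rfl⟩ := exists_append_of_length_eq_add hl
  obtain ⟨l₁₂, l₃, h₁₂, rfl, rfl⟩ := exists_append_of_length_eq_add h₁₂₃
  obtain ⟨l₁, l₂, rfl, rfl, rfl⟩ := exists_append_of_length_eq_add h₁₂
  rw [tdrl_replicate_four, tdrl_replicate_four]

theorem exists_inversions_of_sublist {b : List Bool} {l : List ℕ} (hl : l.Pairwise (· < ·))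
    (hb : l.length = b.length) (hsub : [false, true, false, true] <+ b) :
    ∃ x₁ x₂ x₃ x₄, x₁ < x₂ ∧ x₂ < x₃ ∧ x₃ < x₄ ∧
      [x₂, x₁] <+ tdrl b l ∧ [x₄, x₃] <+ tdrl b l := by
  rw [← map_snd_zip hb.ge, sublist_map_iff] at hsub
  obtain ⟨q, hq, hqb⟩ := hsub
  obtain ⟨⟨x₁, c₁⟩, ⟨x₂, c₂⟩, ⟨x₃, c₃⟩, ⟨x₄, c₄⟩, rfl⟩ :=
    length_eq_four.mp (by simpa using congrArg length hqb.symm)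
  simp only [map_cons, map_nil, cons.injEq] at hqb
  obtain ⟨rfl, rfl, rfl, rfl, -⟩ := hqb
  have hzip : (l.zip b).Pairwise (fun p q => p.1 < q.1) :=
    pairwise_map.mp (by rwa [map_fst_zip hb.le])
  obtain ⟨⟨h₁₂, -⟩, ⟨h₂₃, -⟩, h₃₄⟩ := by simpa using hzip.sublist hq
  have hmem : ∀ p ∈ [(x₁, false), (x₂, true), (x₃, false), (x₄, true)], p ∈ l.zip b :=
    fun _ hp => hq.subset hp
  exact ⟨x₁, x₂, x₃, x₄, h₁₂, h₂₃, h₃₄,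
    pair_sublist_tdrl (hmem _ (by simp)) (hmem _ (by simp)),
    pair_sublist_tdrl (hmem _ (by simp)) (hmem _ (by simp))⟩

theorem not_sublist_of_tdrl_tdrl_eq_self {b b' : List Bool} {l : List ℕ}
    (hl : l.Pairwise (· < ·)) (hb : l.length = b.length) (h : tdrl b' (tdrl b l) = l) :
    ¬ [false, true, false, true] <+ b := by
  intro hsub
  obtain ⟨x₁, x₂, x₃, x₄, h₁₂, h₂₃, h₃₄, hinv₁, hinv₂⟩ :=
    exists_inversions_of_sublist hl hb hsub
  have hperm : tdrl b l ~ l := tdrl_perm hb.le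
  have hsplit : tdrlFront b' (tdrl b l) ++ tdrlBack b' (tdrl b l) = l := h
  have h₃₂ := lt_of_inversions_of_shuffle (hperm.nodup_iff.mpr (hl.imp ne_of_lt))
    (tdrlFront_sublist _ _) (tdrlBack_sublist _ _) (hsplit ▸ hl)
    (by rw [hsplit]; exact hperm.subset) hinv₁ hinv₂ h₁₂ h₃₄
  exact lt_asymm h₂₃ h₃₂

end TDRL

theorem stmt_6 (n : ℕ) (b : List Bool) (hb : b.length = n) :
    (∃ b' : List Bool, b'.length = n ∧ tdrl b' (tdrl b (ident n)) = ident n) ↔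
      ∃ r s t u : ℕ, r + s + t + u = n ∧
        b = List.replicate r true ++ List.replicate s false ++
            List.replicate t true ++ List.replicate u false := by
  have hident : (ident n).length = n := length_range'
  constructor
  · rintro ⟨b', -, h⟩
    obtain ⟨ms, hlen, rfl⟩ := exists_blocks_of_not_sublist_alternating (c := false) (k := 3)
      (not_sublist_of_tdrl_tdrl_eq_self pairwise_lt_range' (hident.trans hb.symm) h)
    obtain ⟨r, s, t, u, rfl⟩ := length_eq_four.mp hlen
    refine ⟨r, s, t, u, ?_, by simp [blocks]⟩
    simpa [blocks, add_assoc] using hb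
  · rintro ⟨r, s, t, u, hsum, rfl⟩
    exact ⟨_, by simp; omega, tdrl_tdrl_replicate_four (hident.trans hsum.symm)⟩
end

section
/- For every n ≥ 1, the number of distinct permutations obtainable from the identity of {1,…,n} by a single mirror TDRL (MTDRL) operation equals 2^{n−1}. -/
/-!
The last entry `x` of `l ++ [x]` ends up between the kept entries and the reversed dropped
entries whichever bit it receives, so only the first `n - 1` bits of the pattern matter. If `l`
has no repetitions and `x ∉ l`, the entries before `x` form the kept subsequence of `l`, which
determines those bits; hence the `2 ^ (n - 1)` shorter patterns give distinct results.
-/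

namespace List

variable {α : Type*}

def kept (l : List α) (b : List Bool) : List α :=
  ((l.zip b).filter (fun p => p.2)).map Prod.fst

def dropped (l : List α) (b : List Bool) : List α :=
  ((l.zip b).filter (fun p => !p.2)).map Prod.fst

theorem kept_subset (l : List α) (b : List Bool) : l.kept b ⊆ l := fun _ hx => by
  obtain ⟨p, hp, rfl⟩ := mem_map.1 hx
  exact (of_mem_zip (mem_of_mem_filter hp)).1

theorem dropped_subset (l : List α) (b : List Bool) : l.dropped b ⊆ l := fun _ hx => by
  obtain ⟨p, hp, rfl⟩ := mem_map.1 hx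
  exact (of_mem_zip (mem_of_mem_filter hp)).1

@[simp]
theorem kept_cons (x : α) (l : List α) (c : Bool) (b : List Bool) :
    (x :: l).kept (c :: b) = if c then x :: l.kept b else l.kept b := by
  cases c <;> rfl

theorem kept_injOn {l : List α} (hl : l.Nodup) :
    Set.InjOn l.kept {b | b.length = l.length} := by
  induction l with
  | nil => simp_all [Set.InjOn]
  | cons x l ih =>
    intro b₁ h₁ b₂ h₂ h
    obtain ⟨c₁, b₁, rfl⟩ := exists_cons_of_length_eq_add_one h₁
    obtain ⟨c₂, b₂, rfl⟩ := exists_cons_of_length_eq_add_one h₂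
    obtain ⟨hx, hl⟩ := nodup_cons.mp hl
    have hx' (b : List Bool) : x ∉ l.kept b := fun hm => hx (kept_subset l b hm)
    have ih' : l.kept b₁ = l.kept b₂ → b₁ = b₂ :=
      ih hl (Nat.succ.inj h₁) (Nat.succ.inj h₂)
    cases c₁ <;> cases c₂ <;> simp only [kept_cons, Bool.false_eq_true, if_false, if_true,
      cons.injEq, true_and] at h ⊢
    · exact ih' h
    · exact (hx' b₁ (h ▸ mem_cons_self)).elim
    · exact (hx' b₂ (h ▸ mem_cons_self)).elim
    · exact ih' h

end List

theorem mtdrl_append_singleton {b : List Bool} {l : List ℕ} (h : l.length = b.length)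
    (c : Bool) (x : ℕ) :
    mtdrl (b ++ [c]) (l ++ [x]) = l.kept b ++ x :: (l.dropped b).reverse := by
  simp only [mtdrl, List.zip_append h]
  cases c <;> simp [List.kept, List.dropped]

theorem SMOut_append_singleton (l : List ℕ) (x : ℕ) :
    SMOut (l ++ [x]) =
      (fun b => l.kept b ++ x :: (l.dropped b).reverse) '' {b | b.length = l.length} := by
  ext ρ
  constructor
  · rintro ⟨b, hb, rfl⟩
    obtain ⟨b, c, rfl⟩ := b.eq_nil_or_concat'.resolve_left (by rintro rfl; simp at hb)
    have hb : b.length = l.length := by simpa using hb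
    exact ⟨b, hb, (mtdrl_append_singleton hb.symm c x).symm⟩
  · rintro ⟨b, hb, rfl⟩
    exact ⟨b ++ [false], by simpa using hb, mtdrl_append_singleton hb.symm false x⟩

theorem ncard_setOf_length_eq (α : Type*) [Fintype α] (n : ℕ) :
    {l : List α | l.length = n}.ncard = Fintype.card α ^ n := by
  rw [← Nat.card_coe_set_eq, ← card_vector, ← Nat.card_eq_fintype_card]
  rfl

theorem ncard_SMOut_append_singleton {l : List ℕ} (hl : l.Nodup) {x : ℕ} (hx : x ∉ l) :
    (SMOut (l ++ [x])).ncard = 2 ^ l.length := by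
  rw [SMOut_append_singleton, Set.InjOn.ncard_image, ncard_setOf_length_eq, Fintype.card_bool]
  intro b₁ h₁ b₂ h₂ h
  have hx_kept (b : List Bool) : x ∉ l.kept b := fun hm => hx (l.kept_subset b hm)
  have hx_dropped (b : List Bool) : x ∉ (l.dropped b).reverse :=
    fun hm => hx (l.dropped_subset b (List.mem_reverse.1 hm))
  exact List.kept_injOn hl h₁ h₂
    ((List.append_cons_inj_of_notMem (hx_kept b₁) (hx_dropped b₁)).1 h).1

theorem stmt_14 (n : ℕ) (hn : 1 ≤ n) :
    (SMOut (ident n)).ncard = 2 ^ (n - 1) := by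
  obtain ⟨m, rfl⟩ := Nat.exists_eq_add_of_le' hn
  rw [ident, List.range'_1_concat, ncard_SMOut_append_singleton List.nodup_range' (by simp)]
  simp
end
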